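/- For all q, q′ ∈ ℝ⁴, the operator identity U(q)∘U(q′) = exp(2πi·Σ_{1≤n<m≤4} q′_n·τ_{nm}·q_m)·U(q + q′) holds on L²(ℝ², ℂ). -/
import Mathlib


open MeasureTheory Complex
open scoped ENNReal

noncomputable section

/-- The pointwise action of `U₁(t)` on functions on `ℝ²`. -/
def U1act (hb th B r s t : ℝ) (f : ℝ × ℝ → ℂ) : ℝ × ℝ → ℂ := fun p =>
  Complex.exp (-Complex.I * B * (1 - r) * t * p.2 / (r * th * B - hb)) *
    f (p.1 + ((th * B * (r + s - r * s) - hb) / (r * th * B - hb)) * t, p.2)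

/-- The pointwise action of `U₂(t)` on functions on `ℝ²`. -/
def U2act (hb th B r s t : ℝ) (f : ℝ × ℝ → ℂ) : ℝ × ℝ → ℂ := fun p =>
  Complex.exp (-Complex.I * r * B * t * p.1 / hb) *
    f (p.1, p.2 - ((r * th * B * (1 - s) - hb) / hb) * t)

/-- The pointwise action of `U₃(t)` on functions on `ℝ²`. -/
def U3act (hb th B r s t : ℝ) (f : ℝ × ℝ → ℂ) : ℝ × ℝ → ℂ := fun p =>
  Complex.exp (Complex.I * t * p.1 / hb) * f (p.1, p.2 - s * (th / hb) * t)

/-- The pointwise action of `U₄(t)` on functions on `ℝ²`. -/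
def U4act (hb th B r s t : ℝ) (f : ℝ × ℝ → ℂ) : ℝ × ℝ → ℂ := fun p =>
  Complex.exp (Complex.I * t * p.2 / hb) * f (p.1 + (1 - s) * (th / hb) * t, p.2)

/-- `U(q) = U₁(q₁) ∘ U₂(q₂) ∘ U₃(q₃) ∘ U₄(q₄)`. -/
def Uact (hb th B r s : ℝ) (q : Fin 4 → ℝ) (f : ℝ × ℝ → ℂ) : ℝ × ℝ → ℂ :=
  U1act hb th B r s (q 0) (U2act hb th B r s (q 1) (U3act hb th B r s (q 2)
    (U4act hb th B r s (q 3) f)))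

/-- The skew-symmetric matrix `τ`. -/
def tauMat (hb th B : ℝ) : Fin 4 → Fin 4 → ℝ :=
  ![![0, B / (2 * Real.pi * hb), -1 / (2 * Real.pi * hb), 0],
    ![-(B / (2 * Real.pi * hb)), 0, 0, -1 / (2 * Real.pi * hb)],
    ![1 / (2 * Real.pi * hb), 0, 0, th / (2 * Real.pi * hb ^ 2)],
    ![0, 1 / (2 * Real.pi * hb), -(th / (2 * Real.pi * hb ^ 2)), 0]]

set_option maxHeartbeats 2000000 in
theorem stmt1 (hb th B r s : ℝ) (hhb : hb ≠ 0) (hth : th ≠ 0) (hB : B ≠ 0)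
    (hnd : hb - th * B ≠ 0) (hrs : r * th * B ≠ hb) (q q' : Fin 4 → ℝ) :
    ∀ f : ℝ × ℝ → ℂ,
      Uact hb th B r s q (Uact hb th B r s q' f) =
        Complex.exp (2 * Real.pi * Complex.I *
            (∑ n : Fin 4, ∑ m : Fin 4, if n < m then q' n * tauMat hb th B n m * q m else 0)) •
          Uact hb th B r s (q + q') f := by
  intro f
  have hsum : (∑ n : Fin 4, ∑ m : Fin 4, if n < m then q' n * tauMat hb th B n m * q m else 0)
      = q' 0 * (B / (2 * Real.pi * hb)) * q 1 + q' 0 * (-1 / (2 * Real.pi * hb)) * q 2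
        + q' 1 * (-1 / (2 * Real.pi * hb)) * q 3 + q' 2 * (th / (2 * Real.pi * hb ^ 2)) * q 3 := by
    simp (config := { decide := true }) [tauMat, Fin.sum_univ_four]
  rw [hsum]
  funext p
  have hd : (r * th * B - hb : ℝ) ≠ 0 := sub_ne_zero.mpr hrs
  have hdC : ((r * th * B - hb : ℝ) : ℂ) ≠ 0 := by exact_mod_cast hd
  have hhbC : ((hb : ℝ) : ℂ) ≠ 0 := by exact_mod_cast hhb
  have hpi : ((Real.pi : ℝ) : ℂ) ≠ 0 := by exact_mod_cast Real.pi_ne_zero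
  simp only [Uact, U1act, U2act, U3act, U4act, Pi.add_apply, Pi.smul_apply, smul_eq_mul]
  simp only [← mul_assoc]
  simp only [← Complex.exp_add]
  congr 1
  · congr 1
    push_cast
    have hdC2 : ((B:ℂ) * r * th - hb) ≠ 0 := by
      rw [show ((B:ℂ) * r * th - hb) = ((r:ℂ) * th * B - hb) by ring]
      push_cast at hdC; exact hdC
    have hdC3 : ((B:ℂ) * r * hb * th - hb ^ 2) ≠ 0 := by
      rw [show ((B:ℂ) * r * hb * th - hb ^ 2) = hb * ((B:ℂ) * r * th - hb) by ring]
      exact mul_ne_zero hhbC hdC2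
    have hpi2 : (Real.pi : ℂ) * (Real.pi : ℂ)⁻¹ = 1 := mul_inv_cancel₀ hpi
    have hdC2 : ((r:ℂ) * th * B - hb) ≠ 0 := by push_cast at hdC; exact hdC
    have h1 : ((B:ℂ) * (1 - r) / ((r:ℂ) * th * B - hb)) * (((r:ℂ) * th * B * (1 - s) - hb) / hb)
        + ((r:ℂ) * B / hb) * (((th:ℂ) * B * (r + s - r * s) - hb) / ((r:ℂ) * th * B - hb))
        = (B:ℂ) / hb := by
      field_simp
      ring
    have h2 : ((B:ℂ) * (1 - r) / ((r:ℂ) * th * B - hb)) * ((s:ℂ) * (th / hb))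
        - (((th:ℂ) * B * (r + s - r * s) - hb) / ((r:ℂ) * th * B - hb)) / hb
        = -(1 / (hb:ℂ)) := by
      field_simp
      ring
    have h3 : (((r:ℂ) * th * B * (1 - s) - hb) / hb) / hb - ((r:ℂ) * B / hb) * ((1 - (s:ℂ)) * (th / hb))
        = -(1 / (hb:ℂ)) := by
      field_simp
      ring
    linear_combination (Complex.I * (q' 0) * (q 1)) * h1 + (Complex.I * (q' 0) * (q 2)) * h2
      + (Complex.I * (q' 1) * (q 3)) * h3
      + (-Complex.I * ((B:ℂ) * (q' 0) * (q 1) - (q' 0) * (q 2) - (q' 1) * (q 3)) * (hb:ℂ)⁻¹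
         - Complex.I * (th:ℂ) * (q' 2) * (q 3) * ((hb:ℂ)⁻¹) ^ 2) * hpi2
  · congr 1
    refine Prod.ext ?_ ?_ <;> (field_simp; ring)
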